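/- Let Γ be a connected graph, let D ∈ ℝ^{Vert(Γ)} be a zero-sum vector, and let μ, μ' ∈ ℝ_{>0}^{Ed(Γ)} satisfy μ(e) ≤ μ'(e) for every edge e. Then g(Γ, μ; D, D) ≤ g(Γ, μ'; D, D), with equality if and only if for each edge e with endpoints i, j, either μ(e) = μ'(e) or no current flows along e in both (Γ, μ) and (Γ, μ'), i.e. v_i − v_j = 0 = v'_i − v'_j for v, v' with L_μ v = D and L_{μ'} v' = D. -/

import Mathlib

open Classical
open scoped BigOperators

/-- A graph: a finite set of vertices, a finite set of edges, and a map assigning to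
each edge its unordered pair of endpoints (loops and parallel edges allowed). -/
structure RGraph where
  V : Type
  E : Type
  [fintV : Fintype V]
  [decV : DecidableEq V]
  [fintE : Fintype E]
  [decE : DecidableEq E]
  ends : E → Sym2 V

attribute [instance] RGraph.fintV RGraph.decV RGraph.fintE RGraph.decE

namespace RGraph

variable (G : RGraph)

/-- The Laplacian of the resistive network `(G, μ)` applied to a voltage assignment `v`:
`(L v) i = Σ_j Σ_{edges e : i → j} (v i − v j) / μ e`. -/
noncomputable def lap (μ : G.E → ℝ) (v : G.V → ℝ) : G.V → ℝ := fun i =>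
  ∑ j : G.V, ∑ e : G.E, if G.ends e = s(i, j) then (v i - v j) / μ e else 0

/-- `i` and `j` are joined by an edge belonging to `F`. -/
def Adj (F : Set G.E) (i j : G.V) : Prop := ∃ e ∈ F, G.ends e = s(i, j)

/-- `i` and `j` lie in the same connected component of the subgraph `Γ|_F`
(the subgraph with all vertices of `Γ` and edge set `F`). -/
def Reach (F : Set G.E) (i j : G.V) : Prop := Relation.EqvGen (G.Adj F) i j

/-- The subgraph `Γ|_F` is connected. -/
def ConnOn (F : Set G.E) : Prop := ∀ i j : G.V, G.Reach F i j

/-- The graph `G` is connected. -/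
def Connected : Prop := G.ConnOn Set.univ

/-- The set of connected components of the subgraph `Γ|_F`. -/
def Comp (F : Set G.E) : Type := Quotient (Relation.EqvGen.setoid (G.Adj F))

/-- A walk from `i` to `j`: a finite sequence of vertices together with a choice of an
edge from each vertex to the next. -/
inductive Walk : G.V → G.V → Type
  | nil (i : G.V) : Walk i i
  | cons {i j k : G.V} (e : G.E) (he : G.ends e = s(i, j)) (w : Walk j k) : Walk i k

namespace Walk

variable {G}

/-- The list of vertices visited by a walk, in order (starting vertex first). -/
def vertices : ∀ {i j : G.V}, G.Walk i j → List G.V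
  | _, _, .nil a => [a]
  | _, _, @Walk.cons _ a _ _ _ _ w => a :: vertices w

/-- The list of edges traversed by a walk, in order. -/
def edges : ∀ {i j : G.V}, G.Walk i j → List G.E
  | _, _, .nil _ => []
  | _, _, .cons e _ w => e :: edges w

/-- The list of steps `(source, edge, target)` of a walk. -/
def steps : ∀ {i j : G.V}, G.Walk i j → List (G.V × G.E × G.V)
  | _, _, .nil _ => []
  | _, _, @Walk.cons _ a b _ e _ w => (a, e, b) :: steps w

/-- All edges of the walk lie in the edge set `F`. -/
def In {i j : G.V} (w : G.Walk i j) (F : Set G.E) : Prop := ∀ e ∈ w.edges, e ∈ F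

/-- A path: a walk all of whose vertices are distinct, except possibly the start and the
end vertex (and which does not traverse any edge twice). -/
def IsPath {i j : G.V} (w : G.Walk i j) : Prop :=
  w.vertices.dropLast.Nodup ∧ w.vertices.tail.Nodup ∧ w.edges.Nodup

/-- Change the (definitionally equal) endpoints of a walk. -/
def copy : ∀ {i j i' j' : G.V}, G.Walk i j → i = i' → j = j' → G.Walk i' j'
  | _, _, _, _, w, rfl, rfl => w

variable (G)

end Walk

/-- `F` is cycle-free: the subgraph `Γ|_F` contains no cycle, i.e. every closed path
with edges in `F` is trivial. -/
def CycleFree (F : Set G.E) : Prop :=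
  ∀ (i : G.V) (w : G.Walk i i), w.In F → w.IsPath → w.edges = []

/-- `T` is a spanning tree of `G`: the subgraph `Γ|_T` is connected and cycle-free. -/
def IsSpanningTree (T : Set G.E) : Prop := G.ConnOn T ∧ G.CycleFree T

/-- `F` is a 2-forest: `Γ|_F` is cycle-free with exactly two connected components. -/
def IsTwoForest (F : Set G.E) : Prop := G.CycleFree F ∧ Nat.card (G.Comp F) = 2

/-- `M` is a maximal forest of the subgraph `Γ|_S`: it is a cycle-free subset of `S`
containing a spanning tree of each connected component of `Γ|_S` (equivalently,
inducing the same connected components as `S`). -/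
def IsMaxForestOf (M S : Set G.E) : Prop :=
  M ⊆ S ∧ G.CycleFree M ∧ ∀ i j : G.V, G.Reach S i j ↔ G.Reach M i j

/-- The sign `σ(i,j;k,ℓ;F)` attached to a 2-forest `F`: `+1` if one component of `Γ|_F`
contains `i` and `k` and the other contains `j` and `ℓ`; `-1` if one component contains
`i` and `ℓ` and the other contains `j` and `k`; `0` otherwise. -/
noncomputable def sigma2 (F : Set G.E) (i j k l : G.V) : ℝ :=
  if ¬ G.Reach F i j ∧ G.Reach F i k ∧ G.Reach F j l then 1
  else if ¬ G.Reach F i j ∧ G.Reach F i l ∧ G.Reach F j k then -1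
  else 0

end RGraph

namespace RGraph

variable (G : RGraph)

/-- An oriented edge: an edge together with an ordering of its endpoints. -/
def OEdge : Type := {x : G.E × G.V × G.V // G.ends x.1 = s(x.2.1, x.2.2)}

noncomputable instance : Fintype G.OEdge := Subtype.fintype _

namespace OEdge

variable {G}

/-- The underlying edge of an oriented edge. -/
def edge (o : G.OEdge) : G.E := o.1.1

/-- The source of an oriented edge. -/
def src (o : G.OEdge) : G.V := o.1.2.1

/-- The target of an oriented edge. -/
def tgt (o : G.OEdge) : G.V := o.1.2.2

/-- The reversal of an oriented edge. -/
def rev (o : G.OEdge) : G.OEdge := ⟨(o.1.1, o.1.2.2, o.1.2.1), o.2.trans Sym2.eq_swap⟩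

end OEdge

/-- An edge current assignment: a real-valued function on oriented edges with
`I(e : i → j) = −I(e : j → i)`. -/
def IsCurrent (I : G.OEdge → ℝ) : Prop := ∀ o : G.OEdge, I o.rev = - I o

/-- The edge current assignment `I` is consistent with the vertex current assignment `D`:
for every vertex `i`, `Σ_j Σ_{edges e : i → j} I(e : i → j) = D i`. -/
def Consistent (I : G.OEdge → ℝ) (D : G.V → ℝ) : Prop :=
  ∀ x : G.V, (∑ o ∈ Finset.univ.filter (fun o : G.OEdge => o.src = x), I o) = D x

lemma exists_oedge (e : G.E) : ∃ o : G.OEdge, o.edge = e := by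
  have h : ∀ z : Sym2 G.V, G.ends e = z → ∃ o : G.OEdge, o.edge = e := by
    refine Sym2.ind (fun a b h => ?_)
    exact ⟨⟨(e, a, b), h⟩, rfl⟩
  exact h (G.ends e) rfl

/-- A choice of orientation for each edge. -/
noncomputable def orient (e : G.E) : G.OEdge := Classical.choose (G.exists_oedge e)

lemma orient_edge (e : G.E) : (G.orient e).edge = e := Classical.choose_spec (G.exists_oedge e)

/-- The power dissipated by an edge current assignment: `Σ_{e ∈ Ed(Γ)} μ(e) I(e)²`. -/
noncomputable def power (μ : G.E → ℝ) (I : G.OEdge → ℝ) : ℝ :=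
  ∑ e : G.E, μ e * (I (G.orient e)) ^ 2

/-- The Green's function `g(Γ, μ; D, E) = Dᵀ v` for any `v` with `L v = E`
(for `Γ` connected, `μ` proper, and `D`, `E` zero-sum vectors, such a `v` exists and
`Dᵀ v` does not depend on the choice). -/
noncomputable def green (μ : G.E → ℝ) (D E : G.V → ℝ) : ℝ :=
  if h : ∃ v : G.V → ℝ, G.lap μ v = E then ∑ x : G.V, D x * Classical.choose h x else 0

/-- The contracted graph `Γ/S`: identify the two endpoints of each edge in `S` and
delete the edges in `S`. -/
noncomputable def contract (S : Set G.E) : RGraph :=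
  letI : DecidableEq (Quotient (Relation.EqvGen.setoid (G.Adj S))) := Classical.decEq _
  letI : DecidablePred (· ∈ S) := Classical.decPred _
  { V := Quotient (Relation.EqvGen.setoid (G.Adj S))
    E := {e : G.E // e ∉ S}
    ends := fun e => (G.ends e.1).map (Quotient.mk (Relation.EqvGen.setoid (G.Adj S))) }

/-- The quotient map `[·] : Vert(Γ) → Vert(Γ/S)`. -/
noncomputable def cmk (S : Set G.E) (x : G.V) : (G.contract S).V :=
  Quotient.mk (Relation.EqvGen.setoid (G.Adj S)) x

/-- The edge of `Γ` underlying an edge of `Γ/S` (recall `Ed(Γ/S) = Ed(Γ)∖S`). -/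
noncomputable def cval (S : Set G.E) (e : (G.contract S).E) : G.E := e.1

/-- The subset of `Ed(Γ/S) = Ed(Γ)∖S` induced by a subset `F ⊆ Ed(Γ)`, namely `F∖S`. -/
noncomputable def cset (S : Set G.E) (F : Set G.E) : Set (G.contract S).E :=
  {e : (G.contract S).E | G.cval S e ∈ F}

/-- The linear map `[·] : ℝ^{Vert(Γ)} → ℝ^{Vert(Γ/S)}` sending the basis vector `e_i`
to `e_{[i]}`. -/
noncomputable def pushVec (S : Set G.E) (D : G.V → ℝ) : (G.contract S).V → ℝ := fun x =>
  ∑ i ∈ Finset.univ.filter (fun i : G.V => G.cmk S i = x), D i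

/-- Contraction of walks: delete from a walk in `Γ` the edges belonging to `S`,
obtaining a walk in `Γ/S`. -/
noncomputable def contractWalk (S : Set G.E) :
    ∀ {i j : G.V}, G.Walk i j → (G.contract S).Walk (G.cmk S i) (G.cmk S j)
  | _, _, .nil a => .nil (G.cmk S a)
  | _, _, @Walk.cons _ a b _ e he w =>
    if hS : e ∈ S then
      (contractWalk S w).copy
        (Quotient.sound (Relation.EqvGen.rel b a ⟨e, hS, he.trans Sym2.eq_swap⟩)) rfl
    else
      Walk.cons (j := G.cmk S b) ⟨e, hS⟩
        (by show Sym2.map _ (G.ends e) = s(G.cmk S a, G.cmk S b)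
            rw [he]
            exact Sym2.map_pair_eq _ a b) (contractWalk S w)

/-- The current `I_{Γ|_T}(e : i → j)` flowing along the oriented edge `e : i → j` when a
unit current from `k` to `ℓ` is imposed on the spanning tree `Γ|_T`: it is `+1` if `e ∈ T`
and the unique path in `Γ|_T` from `k` to `ℓ` traverses `e` from `i` to `j`, `−1` if it
traverses `e` from `j` to `i`, and `0` otherwise. -/
noncomputable def treeCurrent (T : Set G.E) (k l : G.V) (e : G.E) (i j : G.V) : ℝ :=
  if e ∈ T ∧ ∃ w : G.Walk k l, w.IsPath ∧ w.In T ∧ (i, e, j) ∈ w.steps then 1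
  else if e ∈ T ∧ ∃ w : G.Walk k l, w.IsPath ∧ w.In T ∧ (j, e, i) ∈ w.steps then -1
  else 0

/-- The extended Green's function on possibly improper resistances: contract the edges of
zero resistance and take the Green's function of the resulting proper network, with the
pushed-forward vertex vectors. -/
noncomputable def egreen (μ : G.E → ℝ) (D E : G.V → ℝ) : ℝ :=
  (G.contract {e : G.E | μ e = 0}).green (fun e => μ (G.cval {e : G.E | μ e = 0} e))
    (G.pushVec {e : G.E | μ e = 0} D) (G.pushVec {e : G.E | μ e = 0} E)

end RGraph

/-! With `a`, `b` the potential drops across the edges for `L_μ v = D` and `L_μ' v' = D`,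
pairing each equation with both `v` and `v'` gives `Dᵀv = Σ a²/μ = Σ ab/μ'` and
`Dᵀv' = Σ b²/μ' = Σ ab/μ`. Hence
`Dᵀv' - Dᵀv = Σ ((a - b)²/μ' + a² (1/μ - 1/μ')) = Σ ab (1/μ - 1/μ')`:
the first form is a sum of nonnegative terms, which vanish only if `a = b` and `a = 0` or
`μ = μ'`; the second form vanishes under the stated edge condition. -/

lemma Sym2.sum_sum_ite_mk_eq {V M : Type*} [Fintype V] [DecidableEq V] [AddCommMonoid M]
    (p q : V) (F : V → V → M) :
    ∑ x : V, ∑ j : V, (if s(p, q) = s(x, j) then F x j else 0) =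
      if p = q then F p p else F p q + F q p := by
  have hpairs :
      Finset.univ.filter (fun y : V × V => s(p, q) = s(y.1, y.2)) = {(p, q), (q, p)} := by
    ext ⟨x, j⟩
    simp only [Finset.mem_filter, Finset.mem_univ, true_and, Finset.mem_insert,
      Finset.mem_singleton, Prod.mk.injEq, Sym2.eq_iff]
    tauto
  rw [← Finset.sum_product' (f := fun x j => if s(p, q) = s(x, j) then F x j else 0),
    Finset.univ_product_univ, ← Finset.sum_filter, hpairs]
  split_ifs with hpq
  · subst hpq
    simp
  · exact Finset.sum_pair (by simp [hpq])

lemma sub_sq_div_add_sq_mul_inv_sub_inv_nonneg {m m' : ℝ} (hm : 0 < m) (hmm' : m ≤ m')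
    (a b : ℝ) : 0 ≤ (a - b) ^ 2 / m' + a ^ 2 * (m⁻¹ - m'⁻¹) :=
  add_nonneg (div_nonneg (sq_nonneg _) (hm.trans_le hmm').le)
    (mul_nonneg (sq_nonneg _) (sub_nonneg.2 (inv_anti₀ hm hmm')))

lemma sub_sq_div_add_sq_mul_inv_sub_inv_eq_zero_iff {m m' : ℝ} (hm : 0 < m) (hmm' : m ≤ m')
    (a b : ℝ) : (a - b) ^ 2 / m' + a ^ 2 * (m⁻¹ - m'⁻¹) = 0 ↔ a = b ∧ (a = 0 ∨ m = m') := by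
  have hm' : 0 < m' := hm.trans_le hmm'
  rw [add_eq_zero_iff_of_nonneg (div_nonneg (sq_nonneg _) hm'.le)
      (mul_nonneg (sq_nonneg _) (sub_nonneg.2 (inv_anti₀ hm hmm'))),
    div_eq_zero_iff, or_iff_left hm'.ne', mul_eq_zero]
  simp only [pow_eq_zero_iff two_ne_zero, sub_eq_zero, inv_inj]

section Energy

variable {ι : Type*} [Fintype ι] {a b μ μ' : ι → ℝ}

lemma sum_sq_div_sub_sum_sq_div_eq_sum (ha : ∑ i, a i ^ 2 / μ i = ∑ i, a i * b i / μ' i) :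
    ∑ i, b i ^ 2 / μ' i - ∑ i, a i ^ 2 / μ i =
      ∑ i, ((a i - b i) ^ 2 / μ' i + a i ^ 2 * ((μ i)⁻¹ - (μ' i)⁻¹)) := by
  have hterm : ∀ i, (a i - b i) ^ 2 / μ' i + a i ^ 2 * ((μ i)⁻¹ - (μ' i)⁻¹) =
      a i ^ 2 / μ i - 2 * (a i * b i / μ' i) + b i ^ 2 / μ' i := fun i => by ring
  simp only [hterm, Finset.sum_add_distrib, Finset.sum_sub_distrib, ← Finset.mul_sum, ← ha]
  ring

lemma sum_sq_div_sub_sum_sq_div_eq_sum_mul (ha : ∑ i, a i ^ 2 / μ i = ∑ i, a i * b i / μ' i)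
    (hb : ∑ i, b i ^ 2 / μ' i = ∑ i, b i * a i / μ i) :
    ∑ i, b i ^ 2 / μ' i - ∑ i, a i ^ 2 / μ i = ∑ i, a i * b i * ((μ i)⁻¹ - (μ' i)⁻¹) := by
  have hterm : ∀ i, a i * b i * ((μ i)⁻¹ - (μ' i)⁻¹) = b i * a i / μ i - a i * b i / μ' i :=
    fun i => by ring
  rw [ha, hb, Finset.sum_congr rfl fun i _ => hterm i, Finset.sum_sub_distrib]

theorem sum_sq_div_le_sum_sq_div (hμ : ∀ i, 0 < μ i) (hle : ∀ i, μ i ≤ μ' i)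
    (ha : ∑ i, a i ^ 2 / μ i = ∑ i, a i * b i / μ' i) :
    ∑ i, a i ^ 2 / μ i ≤ ∑ i, b i ^ 2 / μ' i := by
  rw [← sub_nonneg, sum_sq_div_sub_sum_sq_div_eq_sum ha]
  exact Finset.sum_nonneg fun i _ =>
    sub_sq_div_add_sq_mul_inv_sub_inv_nonneg (hμ i) (hle i) (a i) (b i)

theorem sum_sq_div_eq_sum_sq_div_iff (hμ : ∀ i, 0 < μ i) (hle : ∀ i, μ i ≤ μ' i)
    (ha : ∑ i, a i ^ 2 / μ i = ∑ i, a i * b i / μ' i)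
    (hb : ∑ i, b i ^ 2 / μ' i = ∑ i, b i * a i / μ i) :
    ∑ i, a i ^ 2 / μ i = ∑ i, b i ^ 2 / μ' i ↔ ∀ i, μ i = μ' i ∨ (a i = 0 ∧ b i = 0) := by
  rw [eq_comm, ← sub_eq_zero]
  constructor
  · rw [sum_sq_div_sub_sum_sq_div_eq_sum ha, Finset.sum_eq_zero_iff_of_nonneg fun i _ =>
      sub_sq_div_add_sq_mul_inv_sub_inv_nonneg (hμ i) (hle i) (a i) (b i)]
    intro h i
    obtain ⟨hab, ha0 | hμμ'⟩ :=
      (sub_sq_div_add_sq_mul_inv_sub_inv_eq_zero_iff (hμ i) (hle i) _ _).1 (h i (Finset.mem_univ i))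
    · exact Or.inr ⟨ha0, hab ▸ ha0⟩
    · exact Or.inl hμμ'
  · intro h
    rw [sum_sq_div_sub_sum_sq_div_eq_sum_mul ha hb]
    refine Finset.sum_eq_zero fun i _ => ?_
    rcases h i with h | ⟨h, -⟩ <;> simp [h]

end Energy

namespace RGraph

variable (G : RGraph)

noncomputable def voltDrop (v : G.V → ℝ) (e : G.E) : ℝ :=
  v (G.orient e).src - v (G.orient e).tgt

variable {G}

lemma ends_orient (e : G.E) : G.ends e = s((G.orient e).src, (G.orient e).tgt) := by
  conv_lhs => rw [← G.orient_edge e]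
  exact (G.orient e).2

lemma voltDrop_eq_zero_iff {v : G.V → ℝ} {e : G.E} {i j : G.V} (h : G.ends e = s(i, j)) :
    G.voltDrop v e = 0 ↔ v i - v j = 0 := by
  rcases Sym2.eq_iff.1 ((ends_orient e).symm.trans h) with ⟨hi, hj⟩ | ⟨hi, hj⟩ <;>
    simp only [voltDrop, hi, hj, sub_eq_zero, eq_comm]

lemma sum_mul_lap (μ : G.E → ℝ) (w v : G.V → ℝ) :
    ∑ x : G.V, w x * G.lap μ v x = ∑ e : G.E, G.voltDrop w e * G.voltDrop v e / μ e := by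
  simp only [lap, Finset.mul_sum, mul_ite, mul_zero]
  rw [Finset.sum_congr rfl fun x _ => Finset.sum_comm, Finset.sum_comm]
  refine Finset.sum_congr rfl fun e _ => ?_
  rw [ends_orient e, Sym2.sum_sum_ite_mk_eq, voltDrop, voltDrop]
  split_ifs with h
  · simp [h]
  · ring

lemma sum_mul_eq_of_lap_eq {μ : G.E → ℝ} {v D : G.V → ℝ} (hv : G.lap μ v = D) (w : G.V → ℝ) :
    ∑ x : G.V, D x * w x = ∑ e : G.E, G.voltDrop w e * G.voltDrop v e / μ e := by
  rw [← sum_mul_lap, ← hv]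
  exact Finset.sum_congr rfl fun x _ => mul_comm _ _

end RGraph

theorem stmt7_general (G : RGraph) (D : G.V → ℝ)
    (μ μ' : G.E → ℝ) (hμ : ∀ e : G.E, 0 < μ e)
    (hle : ∀ e : G.E, μ e ≤ μ' e)
    (v v' : G.V → ℝ) (hv : G.lap μ v = D) (hv' : G.lap μ' v' = D) :
    (∑ x : G.V, D x * v x ≤ ∑ x : G.V, D x * v' x) ∧
    ((∑ x : G.V, D x * v x = ∑ x : G.V, D x * v' x) ↔
      ∀ (e : G.E) (i j : G.V), G.ends e = s(i, j) →
        μ e = μ' e ∨ (v i - v j = 0 ∧ v' i - v' j = 0)) := by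
  have hvv := RGraph.sum_mul_eq_of_lap_eq hv v
  have hvv' := RGraph.sum_mul_eq_of_lap_eq hv' v
  have hv'v := RGraph.sum_mul_eq_of_lap_eq hv v'
  have hv'v' := RGraph.sum_mul_eq_of_lap_eq hv' v'
  simp only [← sq] at hvv hv'v'
  have ha := hvv.symm.trans hvv'
  have hb := hv'v'.symm.trans hv'v
  rw [hvv, hv'v']
  refine ⟨sum_sq_div_le_sum_sq_div hμ hle ha,
    (sum_sq_div_eq_sum_sq_div_iff hμ hle ha hb).trans ⟨fun h e i j hij => ?_, fun h e => ?_⟩⟩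
  · rw [← RGraph.voltDrop_eq_zero_iff hij, ← RGraph.voltDrop_eq_zero_iff hij]
    exact h e
  · exact h e _ _ (RGraph.ends_orient e)

theorem stmt7 (G : RGraph) (hG : G.Connected) (D : G.V → ℝ) (hD : ∑ x : G.V, D x = 0)
    (μ μ' : G.E → ℝ) (hμ : ∀ e : G.E, 0 < μ e) (hμ' : ∀ e : G.E, 0 < μ' e)
    (hle : ∀ e : G.E, μ e ≤ μ' e)
    (v v' : G.V → ℝ) (hv : G.lap μ v = D) (hv' : G.lap μ' v' = D) :
    (∑ x : G.V, D x * v x ≤ ∑ x : G.V, D x * v' x) ∧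
    ((∑ x : G.V, D x * v x = ∑ x : G.V, D x * v' x) ↔
      ∀ (e : G.E) (i j : G.V), G.ends e = s(i, j) →
        μ e = μ' e ∨ (v i - v j = 0 ∧ v' i - v' j = 0)) :=
  stmt7_general G D μ μ' hμ hle v v' hv hv'
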